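/- arXiv:cs/0510085 — 3 statements merged into one kernel-verified Lean document; each statement's English description precedes it below -/
import Mathlib

section
/- For a signal x whose Fourier transform is supported in (-W/2, W/2), and for any real t and τ, the shifted signal satisfies x(t-τ) = Σ_{n∈ℤ} x(t - n/W) · sinc(W(τ - n/W)), where sinc(u) = sin(πu)/(πu). -/
open MeasureTheory Complex Real

noncomputable def sinc (u : ℝ) : ℝ := if u = 0 then 1 else Real.sin (π * u) / (π * u)

open Set AddCircle FourierTransform ComplexConjugate

/-!
Write `X = 𝓕 x`. Since `X` is continuous and vanishes off `[-W/2, W/2]`, Fourier inversion gives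
`x s = ∫_{-W/2}^{W/2} X θ e^{2πisθ} dθ`. On the period interval `[-W/2, W/2]` the Fourier
coefficients of `θ ↦ X θ e^{2πitθ}` are `x (t - n/W) / W` and those of `θ ↦ e^{2πiτθ}` are
`sinc (W (τ - n/W))`, so Parseval's identity for this pair of functions is exactly the sampling
expansion of `x (t - τ)`.
-/

theorem mul_sinc_mul_eq_sin_div (W : ℝ) {b : ℝ} (hb : b ≠ 0) :
    W * _root_.sinc (W * b) = Real.sin (π * W * b) / (π * b) := by
  rcases eq_or_ne W 0 with rfl | hW
  · simp
  rw [_root_.sinc, if_neg (mul_ne_zero hW hb)]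
  field_simp

theorem intervalIntegral_cexp_eq_mul_sinc (W b : ℝ) :
    ∫ θ in -(W / 2)..W / 2, cexp (2 * π * I * b * θ) = (W * _root_.sinc (W * b) : ℝ) := by
  rcases eq_or_ne b 0 with rfl | hb
  · simp [_root_.sinc]
  have hc : 2 * π * I * b ≠ 0 := by simp [Real.pi_ne_zero, I_ne_zero, hb]
  rw [integral_exp_mul_complex hc, mul_sinc_mul_eq_sin_div W hb]
  push_cast
  have h1 : 2 * π * I * b * (W / 2) = π * W * b * I := by ring
  have h2 : 2 * π * I * b * -(W / 2) = -(π * W * b * I) := by ring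
  rw [h1, h2, Complex.sin]
  field_simp
  rw [I_sq]
  ring

section Parseval

variable {T : ℝ} [Fact (0 < T)]

theorem hasSum_fourierCoeff_mul_conj (f g : Lp ℂ 2 (haarAddCircle (T := T))) :
    HasSum (fun n => fourierCoeff f n * conj (fourierCoeff g n))
      (∫ z, f z * conj (g z) ∂haarAddCircle) := by
  have hterm (n : ℤ) : inner ℂ g (fourierBasis n) * inner ℂ (fourierBasis n) f =
      fourierCoeff f n * conj (fourierCoeff g n) := by
    rw [← fourierBasis_repr, ← fourierBasis_repr, fourierBasis.repr_apply_apply,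
      fourierBasis.repr_apply_apply, inner_conj_symm, mul_comm]
  have htotal : inner ℂ g f = ∫ z, f z * conj (g z) ∂haarAddCircle := L2.inner_def g f
  rw [← htotal, ← funext hterm]
  exact fourierBasis.hasSum_inner_mul_inner g f

end Parseval

theorem hasSum_fourierCoeffOn_mul_conj {a b : ℝ} {f g : ℝ → ℂ} (hab : a < b)
    (hf : MemLp f 2 (volume.restrict (Ioc a b))) (hg : MemLp g 2 (volume.restrict (Ioc a b))) :
    HasSum (fun n => fourierCoeffOn hab f n * conj (fourierCoeffOn hab g n))
      ((b - a)⁻¹ • ∫ θ in a..b, f θ * conj (g θ)) := by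
  have := Fact.mk (sub_pos.mpr hab)
  rw [← add_sub_cancel a b] at hf hg
  have hF := hf.memLp_liftIoc.haarAddCircle
  have hG := hg.memLp_liftIoc.haarAddCircle
  convert hasSum_fourierCoeff_mul_conj hF.toLp hG.toLp using 1
  · simp [fourierCoeff_congr_ae hF.coeFn_toLp, fourierCoeff_congr_ae hG.coeFn_toLp,
      fourierCoeff_liftIoc_eq]
  · nth_rw 2 [← add_sub_cancel a b]
    rw [← integral_liftIoc_eq_intervalIntegral, ← integral_haarAddCircle]
    refine integral_congr_ae ?_
    filter_upwards [hF.coeFn_toLp, hG.coeFn_toLp] with z hFz hGz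
    rw [hFz, hGz]
    rfl

theorem norm_cexp_two_pi_I_mul (s θ : ℝ) : ‖cexp (2 * π * I * s * θ)‖ = 1 := by
  rw [show 2 * π * I * s * θ = ((2 * π * s * θ : ℝ) : ℂ) * I by push_cast; ring]
  exact norm_exp_ofReal_mul_I _

theorem memLp_cexp_two_pi_I_mul (μ : Measure ℝ) [IsFiniteMeasure μ] (p : ENNReal) (s : ℝ) :
    MemLp (fun θ : ℝ => cexp (2 * π * I * s * θ)) p μ :=
  .of_bound (by fun_prop) 1 (.of_forall fun θ => (norm_cexp_two_pi_I_mul s θ).le)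

theorem fourier_neg_mul_cexp (T s θ : ℝ) (n : ℤ) :
    fourier (-n) (θ : AddCircle T) * cexp (2 * π * I * s * θ) =
      cexp (2 * π * I * (s - n / T : ℝ) * θ) := by
  rw [fourier_coe_apply, ← Complex.exp_add]
  congr 1
  push_cast
  ring

theorem fourierCoeffOn_mul_cexp {a b : ℝ} (hab : a < b) (f : ℝ → ℂ) (s : ℝ) (n : ℤ) :
    fourierCoeffOn hab (fun θ => f θ * cexp (2 * π * I * s * θ)) n =
      (b - a)⁻¹ * ∫ θ in a..b, f θ * cexp (2 * π * I * (s - n / (b - a) : ℝ) * θ) := by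
  rw [fourierCoeffOn_eq_integral, one_div, real_smul]
  congr 1
  refine intervalIntegral.integral_congr fun θ _ => ?_
  rw [smul_eq_mul, ← fourier_neg_mul_cexp, mul_left_comm]

theorem cexp_mul_conj_cexp (u s θ : ℝ) :
    cexp (2 * π * I * u * θ) * conj (cexp (2 * π * I * s * θ)) =
      cexp (2 * π * I * (u - s : ℝ) * θ) := by
  rw [← Complex.exp_conj, ← Complex.exp_add]
  congr 1
  simp only [map_mul, conj_ofReal, conj_I, map_ofNat]
  push_cast
  ring

theorem hasSum_sampling_of_intervalIntegral {W : ℝ} (hW : 0 < W) {X x : ℝ → ℂ}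
    (hX : MemLp X 2 (volume.restrict (Ioc (-(W / 2)) (W / 2))))
    (hx : ∀ s, x s = ∫ θ in -(W / 2)..W / 2, X θ * cexp (2 * π * I * s * θ)) (t τ : ℝ) :
    HasSum (fun n : ℤ => x (t - n / W) * (_root_.sinc (W * (τ - n / W)) : ℂ)) (x (t - τ)) := by
  have hab : -(W / 2) < W / 2 := by linarith
  have hlen : W / 2 - -(W / 2) = W := by ring
  have hW' : (W : ℂ) ≠ 0 := ofReal_ne_zero.mpr hW.ne'
  have hF : MemLp (fun θ => X θ * cexp (2 * π * I * t * θ)) 2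
      (volume.restrict (Ioc (-(W / 2)) (W / 2))) :=
    (memLp_cexp_two_pi_I_mul _ ⊤ t).mul' hX
  -- `1 * _` puts `g` in the shape of `fourierCoeffOn_mul_cexp`
  have hG : MemLp (fun θ : ℝ => 1 * cexp (2 * π * I * τ * θ)) 2
      (volume.restrict (Ioc (-(W / 2)) (W / 2))) := by
    simpa only [one_mul] using memLp_cexp_two_pi_I_mul _ 2 τ
  have hcoeffF (n : ℤ) : fourierCoeffOn hab (fun θ => X θ * cexp (2 * π * I * t * θ)) n =
      (W : ℂ)⁻¹ * x (t - n / W) := by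
    rw [fourierCoeffOn_mul_cexp, hlen, hx, ofReal_inv]
  have hcoeffG (n : ℤ) : fourierCoeffOn hab (fun θ => 1 * cexp (2 * π * I * τ * θ)) n =
      (_root_.sinc (W * (τ - n / W)) : ℂ) := by
    rw [fourierCoeffOn_mul_cexp, hlen]
    simp only [one_mul, intervalIntegral_cexp_eq_mul_sinc]
    push_cast
    field_simp
  have htotal : ∫ θ in -(W / 2)..W / 2,
      X θ * cexp (2 * π * I * t * θ) * conj (1 * cexp (2 * π * I * τ * θ)) = x (t - τ) := by
    rw [hx]
    refine intervalIntegral.integral_congr fun θ _ => ?_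
    rw [one_mul, mul_assoc, cexp_mul_conj_cexp]
  have H := (hasSum_fourierCoeffOn_mul_conj hab hF hG).mul_left (W : ℂ)
  simp only [hcoeffF, hcoeffG, conj_ofReal, hlen, htotal, real_smul] at H
  rw [ofReal_inv, mul_inv_cancel_left₀ hW'] at H
  simpa only [mul_assoc, mul_inv_cancel_left₀ hW'] using H

theorem fourier_eq_integral_mul_cexp (x : ℝ → ℂ) (θ : ℝ) :
    𝓕 x θ = ∫ t, x t * cexp (-(2 * π * I * t * θ)) := by
  rw [Real.fourier_real_eq_integral_exp_smul]
  congr 1 with t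
  rw [smul_eq_mul, mul_comm]
  push_cast
  ring_nf

theorem MeasureTheory.Integrable.continuous_fourier {x : ℝ → ℂ} (hx : Integrable x) :
    Continuous (𝓕 x) :=
  VectorFourier.fourierIntegral_continuous Real.continuous_fourierChar
    (innerSL ℝ).continuous₂ hx

theorem eq_intervalIntegral_fourier_mul_cexp {a b : ℝ} (hab : a ≤ b) {x : ℝ → ℂ}
    (hcont : Continuous x) (hint : Integrable x) (hsupp : ∀ θ ∉ Icc a b, 𝓕 x θ = 0) (s : ℝ) :
    x s = ∫ θ in a..b, 𝓕 x θ * cexp (2 * π * I * s * θ) := by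
  have hXint : Integrable (𝓕 x) :=
    hint.continuous_fourier.integrable_of_hasCompactSupport (.intro isCompact_Icc hsupp)
  calc x s = 𝓕⁻ (𝓕 x) s := by rw [hcont.fourierInv_fourier_eq hint hXint]
    _ = ∫ θ, 𝓕 x θ * cexp (2 * π * I * s * θ) := by
      rw [Real.fourierInv_eq']
      congr 1 with θ
      rw [smul_eq_mul, mul_comm, RCLike.inner_apply, conj_trivial]
      push_cast
      ring_nf
    _ = ∫ θ in a..b, 𝓕 x θ * cexp (2 * π * I * s * θ) := by
      rw [intervalIntegral.integral_of_le hab, ← integral_Icc_eq_integral_Ioc,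
        setIntegral_eq_integral_of_forall_compl_eq_zero fun θ hθ => by rw [hsupp θ hθ, zero_mul]]

theorem stmt0_general (W : ℝ) (hW : 0 < W) (x : ℝ → ℂ)
    (hcont : Continuous x) (hx1 : Integrable x)
    (hband : ∀ θ : ℝ, θ ∉ Set.Ioo (-(W/2)) (W/2) →
      (∫ t : ℝ, x t * Complex.exp (-(2 * π * Complex.I * t * θ))) = 0)
    (t τ : ℝ) :
    HasSum (fun n : ℤ => x (t - n / W) * (_root_.sinc (W * (τ - n / W)) : ℂ))
      (x (t - τ)) := by
  have hsupp : ∀ θ ∉ Icc (-(W / 2)) (W / 2), 𝓕 x θ = 0 := fun θ hθ => by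
    rw [fourier_eq_integral_mul_cexp]
    exact hband θ fun h => hθ (Ioo_subset_Icc_self h)
  have hX : MemLp (𝓕 x) 2 (volume.restrict (Ioc (-(W / 2)) (W / 2))) :=
    (hx1.continuous_fourier.memLp_of_hasCompactSupport (.intro isCompact_Icc hsupp)).restrict _
  exact hasSum_sampling_of_intervalIntegral hW hX
    (eq_intervalIntegral_fourier_mul_cexp (by linarith) hcont hx1 hsupp) t τ

/-- Alternative form of the Shannon sampling theorem: for a continuous L² signal `x`
whose Fourier transform vanishes outside `(-W/2, W/2)`,
`x (t - τ) = ∑_{n ∈ ℤ} x (t - n/W) * sinc (W (τ - n/W))`. -/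
theorem stmt0 (W : ℝ) (hW : 0 < W) (x : ℝ → ℂ)
    (hcont : Continuous x) (hx1 : Integrable x) (hx2 : MemLp x 2 volume)
    (hband : ∀ θ : ℝ, θ ∉ Set.Ioo (-(W/2)) (W/2) →
      (∫ t : ℝ, x t * Complex.exp (-(2 * π * Complex.I * t * θ))) = 0)
    (t τ : ℝ) :
    HasSum (fun n : ℤ => x (t - n / W) * (_root_.sinc (W * (τ - n / W)) : ℂ))
      (x (t - τ)) :=
  stmt0_general W hW x hcont hx1 hband t τ
end

section
/- Let S(θ,τ) = (√|a₀|/|1-a₀|) e^{-j2πθ(b₀ - a₀τ)/(1-a₀)} for a₀ ≠ 1. Then the narrowband channel operator Nₛ x(t) = ∫∫ S(θ,τ) x(t-τ) e^{j2πθ t} dτ dθ equals the one-path delay-dilation channel: Nₛ x(t) = |a₀|^{-1/2} x((t-b₀)/a₀), for Schwartz functions x (integrals interpreted in the distributional/iterated sense). -/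
open MeasureTheory Complex Real Filter
open scoped FourierTransform

/-!
After the substitution `τ ↦ t - τ` the phase of the spreading function is `θ (A - c τ)` with
`A = (t - b₀)/(1 - a₀)` and `c = a₀/(1 - a₀)`. For each truncation `[-R, R]` Fubini moves the
`τ`-integral inside, where it is the Fourier transform `𝓕 x (c θ)` up to the unimodular factor
`e^{2πiθA}`. Letting `R → ∞` leaves the integral of an integrable function, which the substitution
`ξ = c θ` and Fourier inversion evaluate to `|c|⁻¹ x (A / c)`.
-/

lemma norm_exp_two_pi_I_mul (θ u : ℝ) : ‖exp (2 * π * I * θ * u)‖ = 1 := by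
  rw [show (2 * π * I * θ * u : ℂ) = ((2 * π * θ * u : ℝ) : ℂ) * I by push_cast; ring]
  exact norm_exp_ofReal_mul_I _

lemma integral_intervalIntegral_mul_swap {f : ℝ → ℂ} (hf : Integrable f) {k : ℝ → ℝ → ℂ}
    (hk : Continuous (Function.uncurry k)) {M : ℝ} (hkM : ∀ τ θ, ‖k τ θ‖ ≤ M) (a b : ℝ) :
    ∫ τ, (∫ θ in a..b, k τ θ) * f τ = ∫ θ in a..b, ∫ τ, k τ θ * f τ := by
  have hbound : Integrable (fun p : ℝ × ℝ => (1 : ℝ) * (M * ‖f p.2‖))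
      ((volume.restrict (Set.uIoc a b)).prod volume) :=
    (integrable_const_iff.2 (Or.inr (isFiniteMeasure_restrict.2
      (by simp)))).mul_prod (hf.norm.const_mul M)
  have hint : Integrable (Function.uncurry fun θ τ => k τ θ * f τ)
      ((volume.restrict (Set.uIoc a b)).prod volume) := by
    refine hbound.mono' ((hk.comp continuous_swap).aestronglyMeasurable.mul hf.1.comp_snd) ?_
    filter_upwards with p
    rw [one_mul, Function.uncurry_apply_pair, norm_mul]
    exact mul_le_mul_of_nonneg_right (hkM _ _) (norm_nonneg _)
  simp_rw [intervalIntegral_integral_swap hint, intervalIntegral.integral_mul_const]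

lemma integral_exp_mul_eq_fourier (f : ℝ → ℂ) (A c θ : ℝ) :
    ∫ τ, exp (2 * π * I * θ * ↑(A - c * τ)) * f τ = exp (2 * π * I * θ * A) * 𝓕 f (c * θ) := by
  rw [Real.fourier_real_eq_integral_exp_smul, ← integral_const_mul]
  congr 1 with τ
  rw [smul_eq_mul, ← mul_assoc, ← Complex.exp_add]
  congr 2
  push_cast
  ring

lemma integrable_exp_mul_fourier_comp_mul {f : ℝ → ℂ} (hFf : Integrable (𝓕 f)) {c : ℝ}
    (hc : c ≠ 0) (A : ℝ) :
    Integrable fun θ : ℝ => exp (2 * π * I * θ * A) * 𝓕 f (c * θ) :=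
  (hFf.comp_mul_left' hc).bdd_mul (by fun_prop)
    (Eventually.of_forall fun θ => (norm_exp_two_pi_I_mul θ A).le)

lemma integral_exp_mul_fourier_comp_mul {f : ℝ → ℂ} (hf : Integrable f)
    (hFf : Integrable (𝓕 f)) {c : ℝ} (hc : c ≠ 0) (A : ℝ) (hfA : ContinuousAt f (A / c)) :
    ∫ θ : ℝ, exp (2 * π * I * θ * A) * 𝓕 f (c * θ) = (|c|⁻¹ : ℝ) * f (A / c) := by
  have hcomp (θ : ℝ) : exp (2 * π * I * θ * A) * 𝓕 f (c * θ) =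
      exp (↑(2 * π * inner ℝ (c * θ) (A / c)) * I) • 𝓕 f (c * θ) := by
    rw [smul_eq_mul, Real.inner_apply]
    congr 2
    push_cast
    field_simp [ofReal_ne_zero.2 hc]
  simp_rw [hcomp, Measure.integral_comp_mul_left
    (fun ξ => exp (↑(2 * π * inner ℝ ξ (A / c)) * I) • 𝓕 f ξ), ← Real.fourierInv_eq',
    hf.fourierInv_fourier_eq hFf hfA, abs_inv, real_smul]

theorem tendsto_integral_intervalIntegral_exp_mul {f : ℝ → ℂ} (hf : Integrable f)
    (hFf : Integrable (𝓕 f)) {c : ℝ} (hc : c ≠ 0) (A : ℝ) (hfA : ContinuousAt f (A / c)) :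
    Tendsto (fun R : ℝ => ∫ τ, (∫ θ in (-R)..R, exp (2 * π * I * θ * ↑(A - c * τ))) * f τ)
      atTop (nhds ((|c|⁻¹ : ℝ) * f (A / c))) := by
  have hswap (R : ℝ) : ∫ τ, (∫ θ in (-R)..R, exp (2 * π * I * θ * ↑(A - c * τ))) * f τ =
      ∫ θ in (-R)..R, exp (2 * π * I * θ * A) * 𝓕 f (c * θ) := by
    rw [integral_intervalIntegral_mul_swap hf (by fun_prop)
      (fun τ θ => (norm_exp_two_pi_I_mul θ (A - c * τ)).le)]
    simp_rw [integral_exp_mul_eq_fourier]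
  simp_rw [hswap, ← integral_exp_mul_fourier_comp_mul hf hFf hc A hfA]
  exact intervalIntegral_tendsto_integral (integrable_exp_mul_fourier_comp_mul hFf hc A)
    tendsto_neg_atTop_atBot tendsto_id

lemma sqrt_abs_div_abs_one_sub_mul_abs_div_inv {a : ℝ} (ha₀ : a ≠ 0) (ha₁ : a ≠ 1) :
    √|a| / |1 - a| * |a / (1 - a)|⁻¹ = 1 / √|a| := by
  have hsq : √|a| * √|a| = |a| := mul_self_sqrt (abs_nonneg a)
  have hsqrt : √|a| ≠ 0 := (sqrt_pos.2 (abs_pos.2 ha₀)).ne'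
  rw [abs_div, inv_div, div_mul_div_cancel₀ (abs_ne_zero.2 (sub_ne_zero.2 ha₁.symm)),
    div_eq_div_iff (abs_ne_zero.2 ha₀) hsqrt, one_mul, hsq]

/-- The narrowband spreading function
`S(θ,τ) = (√|a₀|/|1-a₀|) e^{-2πiθ(b₀-a₀τ)/(1-a₀)}` realizes the one-path
delay-dilation channel: for Schwartz `x`, the iterated (principal-value in θ)
integral `∫∫ S(θ,τ) x(t-τ) e^{2πiθt} dθ dτ` converges to
`|a₀|^{-1/2} x((t-b₀)/a₀)`. -/
theorem stmt6 (a₀ b₀ : ℝ) (ha₀ : a₀ ≠ 0) (ha₁ : a₀ ≠ 1)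
    (x : SchwartzMap ℝ ℂ) (t : ℝ) :
    Filter.Tendsto
      (fun R : ℝ => ∫ τ : ℝ,
        (∫ θ in (-R)..R,
          ((Real.sqrt |a₀| / |1 - a₀| : ℝ) : ℂ) *
            Complex.exp (-(2 * π * Complex.I * θ * ((b₀ - a₀ * τ) / (1 - a₀)))) *
            Complex.exp (2 * π * Complex.I * θ * t)) * x (t - τ))
      Filter.atTop
      (nhds (((1 / Real.sqrt |a₀| : ℝ) : ℂ) * x ((t - b₀) / a₀))) := by
  have hsub : 1 - a₀ ≠ 0 := sub_ne_zero.2 ha₁.symm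
  have hsubC : (1 : ℂ) - a₀ ≠ 0 := by exact_mod_cast hsub
  set A := (t - b₀) / (1 - a₀)
  set c := a₀ / (1 - a₀)
  have hc : c ≠ 0 := div_ne_zero ha₀ hsub
  have hAc : A / c = (t - b₀) / a₀ := div_div_div_cancel_right₀ hsub _ _
  have hphase (τ θ : ℝ) : exp (-(2 * π * I * θ * ((b₀ - a₀ * τ) / (1 - a₀)))) *
      exp (2 * π * I * θ * t) = exp (2 * π * I * θ * ↑(A - c * (t - τ))) := by
    rw [← Complex.exp_add]
    congr 1
    push_cast [A, c]
    field_simp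
    ring
  have hFx : Integrable (𝓕 (x : ℝ → ℂ)) := (𝓕 x).integrable
  have hlim := (tendsto_integral_intervalIntegral_exp_mul x.integrable hFx hc A
    x.continuous.continuousAt).const_mul ((√|a₀| / |1 - a₀| : ℝ) : ℂ)
  rw [hAc, ← mul_assoc, ← ofReal_mul, sqrt_abs_div_abs_one_sub_mul_abs_div_inv ha₀ ha₁] at hlim
  refine hlim.congr fun R => ?_
  simp_rw [← integral_const_mul, ← mul_assoc, ← intervalIntegral.integral_const_mul,
    mul_assoc _ (cexp _), hphase]
  exact (integral_sub_left_eq_self _ volume t).symm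
end

section
/- In the time-frequency canonical model setting, the inverse filter coefficients satisfy â_{m,n} = (1/(WT)) a_{−m,n}, where a_{m,n} = √(W/T) ∫₀^T e^{−j2πnt/T} sinc(Wt − m) dt and â_{m,n} are the Fourier coefficients of 1/A(e^{j2πθ₁}, e^{j2πθ₂}) with A(e^{j2πθ₁},e^{j2πθ₂}) = √(WT) e^{j2πWTθ₁θ₂} for θ₁ ∈ (0,1/2) and √(WT) e^{j2πWT(θ₁−1)θ₂} for θ₁ ∈ (1/2,1). -/
open MeasureTheory Complex Real

/-- The time-frequency coefficients
`a_{m,n} = √(W/T) ∫₀^T e^{−2πint/T} sinc(Wt − m) dt`. -/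
noncomputable def acoef (W T : ℝ) (m n : ℤ) : ℂ :=
  ((Real.sqrt (W / T) : ℝ) : ℂ) *
    ∫ t in (0 : ℝ)..T, Complex.exp (-(2 * π * Complex.I * (n * t / T))) *
      ((_root_.sinc (W * t - m) : ℝ) : ℂ)

/-- The Z-transform `A` evaluated on the torus:
`A(e^{2πiθ₁},e^{2πiθ₂}) = √(WT) e^{2πiWTθ₁θ₂}` for `θ₁ ∈ (0,1/2)` and
`√(WT) e^{2πiWT(θ₁−1)θ₂}` for `θ₁ ∈ (1/2,1)`. -/
noncomputable def Afun (W T : ℝ) (θ₁ θ₂ : ℝ) : ℂ :=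
  if θ₁ < 1/2 then
    ((Real.sqrt (W * T) : ℝ) : ℂ) * Complex.exp (2 * π * Complex.I * (W * T * θ₁ * θ₂))
  else
    ((Real.sqrt (W * T) : ℝ) : ℂ) * Complex.exp (2 * π * Complex.I * (W * T * (θ₁ - 1) * θ₂))

/-! Dividing by `A` removes the chirp `e^{2πiWTθ₁θ₂}`. On `θ₁ ≥ 1/2` the phase `e^{-2πiθ₁m}` equals
`e^{-2πi(θ₁-1)m}`, so as a function of `θ₁` the integrand is the single exponential
`e^{-2πi(m + WTθ₂)u} / √(WT)` with `u ∈ [-1/2, 1/2)` wrapped onto `[0, 1)`; its integral is the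
Fourier transform of the centred box, `sinc(m + WTθ₂) / √(WT)`. The integrand has constant modulus,
so the two integrals may be swapped, and the substitution `t = Tθ₂` in the remaining integral
gives `a_{-m,n} / (WT)`. -/
lemma integral_exp_neg_two_pi_I_mul_eq_sinc (s : ℝ) :
    ∫ u in -(1/2 : ℝ)..1/2, Complex.exp (-(2 * π * Complex.I * s) * u) = (_root_.sinc s : ℂ) := by
  rcases eq_or_ne s 0 with rfl | hs
  · norm_num [_root_.sinc]
  have hπs : (π : ℂ) * s ≠ 0 := by exact_mod_cast mul_ne_zero Real.pi_ne_zero hs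
  have hc : -(2 * π * Complex.I * s) ≠ 0 := by
    rw [show -(2 * π * Complex.I * s) = -(2 * Complex.I) * (π * s) by ring]
    exact mul_ne_zero (by simp) hπs
  rw [integral_exp_mul_complex hc, _root_.sinc, if_neg hs]
  push_cast
  rw [Complex.sin]
  field_simp
  ring_nf
  rw [Complex.I_sq]
  ring

lemma integral_wrap_eq_integral_centered {E : Type*} [NormedAddCommGroup E] [NormedSpace ℝ E]
    {g : ℝ → E} (hg : IntervalIntegrable g volume (-(1/2)) (1/2)) :
    ∫ x in (0 : ℝ)..1, (if x < 1/2 then g x else g (x - 1)) = ∫ x in -(1/2 : ℝ)..1/2, g x := by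
  have hg_pos : IntervalIntegrable g volume 0 (1/2) :=
    hg.mono_set (Set.uIcc_subset_uIcc (by norm_num [Set.mem_uIcc]) (by norm_num [Set.mem_uIcc]))
  have hg_neg : IntervalIntegrable g volume (-(1/2)) 0 :=
    hg.mono_set (Set.uIcc_subset_uIcc (by norm_num [Set.mem_uIcc]) (by norm_num [Set.mem_uIcc]))
  have hleft : Set.EqOn (fun x => if x < 1/2 then g x else g (x - 1)) g (Set.uIoo 0 (1/2)) :=
    fun x hx => if_pos (by simpa [Set.uIoo_of_le] using hx.2)
  have hright : Set.EqOn (fun x => if x < 1/2 then g x else g (x - 1)) (fun x => g (x - 1))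
      (Set.uIcc (1/2) 1) :=
    fun x hx => if_neg (not_lt.2 (Set.uIcc_of_le (by norm_num : (1/2 : ℝ) ≤ 1) ▸ hx).1)
  have hshift : ∫ x in (1/2 : ℝ)..1, g (x - 1) = ∫ x in -(1/2 : ℝ)..0, g x := by
    rw [intervalIntegral.integral_comp_sub_right]; norm_num
  have hg_shift : IntervalIntegrable (fun x => g (x - 1)) volume (1/2) 1 := by
    convert hg_neg.comp_sub_right 1 using 1 <;> norm_num
  rw [← intervalIntegral.integral_add_adjacent_intervals (b := 1/2)
      (hg_pos.congr_uIoo hleft.symm)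
      (hg_shift.congr_uIoo (hright.symm.mono Set.uIoo_subset_uIcc_self)),
    intervalIntegral.integral_congr_uIoo hleft, intervalIntegral.integral_congr hright, hshift,
    add_comm, intervalIntegral.integral_add_adjacent_intervals hg_neg hg_pos]

lemma norm_Afun (W T θ₁ θ₂ : ℝ) : ‖Afun W T θ₁ θ₂‖ = √(W * T) := by
  unfold Afun
  split_ifs <;> simp [Complex.norm_exp]

lemma measurable_Afun (W T : ℝ) : Measurable (Function.uncurry (Afun W T)) := by
  unfold Afun
  exact Measurable.ite (measurableSet_lt measurable_fst measurable_const) (by fun_prop) (by fun_prop)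

lemma exp_div_Afun (W T : ℝ) (m : ℤ) (θ₁ θ₂ : ℝ) :
    Complex.exp (-(2 * π * Complex.I * θ₁ * m)) / Afun W T θ₁ θ₂ =
      (√(W * T) : ℂ)⁻¹ *
        (if θ₁ < 1/2 then Complex.exp (-(2 * π * Complex.I * ↑(W * T * θ₂ + m)) * θ₁)
          else Complex.exp (-(2 * π * Complex.I * ↑(W * T * θ₂ + m)) * ↑(θ₁ - 1))) := by
  have hdiv : ∀ a b : ℂ, Complex.exp a / ((√(W * T) : ℂ) * Complex.exp b) =
      (√(W * T) : ℂ)⁻¹ * Complex.exp (a - b) := fun a b => by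
    rw [Complex.exp_sub, div_mul_eq_div_div_swap, div_eq_inv_mul]
  unfold Afun
  split_ifs
  · rw [hdiv]; congr 2; push_cast; ring
  · rw [hdiv]
    congr 1
    -- the two exponents differ by `2πim`
    rw [Complex.exp_eq_exp_iff_exists_int]
    exact ⟨-m, by push_cast; ring⟩

lemma integral_exp_div_Afun (W T : ℝ) (m : ℤ) (θ₂ : ℝ) :
    ∫ θ₁ in (0 : ℝ)..1, Complex.exp (-(2 * π * Complex.I * θ₁ * m)) / Afun W T θ₁ θ₂ =
      (√(W * T) : ℂ)⁻¹ * (_root_.sinc (W * T * θ₂ + m) : ℂ) := by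
  have hexp : Continuous fun u : ℝ =>
      Complex.exp (-(2 * π * Complex.I * ↑(W * T * θ₂ + m)) * u) := by
    fun_prop
  simp_rw [exp_div_Afun, intervalIntegral.integral_const_mul]
  congr 1
  exact (integral_wrap_eq_integral_centered (hexp.intervalIntegrable _ _)).trans
    (integral_exp_neg_two_pi_I_mul_eq_sinc _)

lemma intervalIntegral_integral_swap_of_norm_le {E : Type*} [NormedAddCommGroup E]
    [NormedSpace ℝ E] {f : ℝ → ℝ → E} (hf : StronglyMeasurable (Function.uncurry f)) {C : ℝ}
    (hC : ∀ x y, ‖f x y‖ ≤ C) {a b c d : ℝ} (hab : a ≤ b) (hcd : c ≤ d) :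
    ∫ x in a..b, ∫ y in c..d, f x y = ∫ y in c..d, ∫ x in a..b, f x y := by
  simp only [intervalIntegral.integral_of_le hab, intervalIntegral.integral_of_le hcd]
  refine integral_integral_swap (Integrable.of_bound hf.aestronglyMeasurable C ?_)
  exact Filter.Eventually.of_forall fun p => hC p.1 p.2

lemma acoef_eq_integral_unit_interval (W : ℝ) {T : ℝ} (hT : T ≠ 0) (m n : ℤ) :
    acoef W T m n = ((√(W / T) * T : ℝ) : ℂ) *
      ∫ θ in (0 : ℝ)..1, Complex.exp (-(2 * π * Complex.I * θ * n)) *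
        (_root_.sinc (W * T * θ - m) : ℂ) := by
  have hsub := intervalIntegral.smul_integral_comp_mul_left (E := ℂ) (a := 0) (b := 1)
    (f := fun t : ℝ => Complex.exp (-(2 * π * Complex.I * (n * t / T))) *
      (_root_.sinc (W * t - m) : ℂ)) (c := T)
  rw [mul_zero, mul_one] at hsub
  have hTC : (T : ℂ) ≠ 0 := by exact_mod_cast hT
  rw [acoef, ← hsub, Complex.real_smul, Complex.ofReal_mul, mul_assoc (√(W / T) : ℂ)]
  congr 2
  refine intervalIntegral.integral_congr fun θ _ => ?_
  simp only [Complex.ofReal_mul, mul_assoc]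
  field_simp

lemma one_div_mul_sqrt_div_mul_eq_inv_sqrt {W T : ℝ} (hW : 0 ≤ W) (hT : 0 < T) :
    1 / (W * T) * (√(W / T) * T) = (√(W * T))⁻¹ := by
  have hsqrt : √(W / T) * T = √(W * T) := by
    rw [show W * T = W / T * T ^ 2 by field_simp, Real.sqrt_mul (div_nonneg hW hT.le),
      Real.sqrt_sq hT.le]
  rw [hsqrt, one_div_mul_eq_div, Real.sqrt_div_self]

/-- In the time-frequency canonical model, the inverse-filter Fourier
coefficients satisfy `â_{m,n} = (1/(WT)) a_{−m,n}`, where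
`â_{m,n} = ∫₀¹∫₀¹ e^{−2πiθ₁m} e^{−2πiθ₂n} / A(e^{2πiθ₁},e^{2πiθ₂}) dθ₁ dθ₂`. -/
theorem stmt19 (W T : ℝ) (hW : 0 < W) (hT : 0 < T) (m n : ℤ) :
    (∫ θ₁ in (0:ℝ)..1, ∫ θ₂ in (0:ℝ)..1,
      Complex.exp (-(2 * π * Complex.I * θ₁ * m)) *
        Complex.exp (-(2 * π * Complex.I * θ₂ * n)) / Afun W T θ₁ θ₂) =
    ((1 / (W * T) : ℝ) : ℂ) * acoef W T (-m) n := by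
  have hmeas : StronglyMeasurable (Function.uncurry fun θ₁ θ₂ : ℝ =>
      Complex.exp (-(2 * π * Complex.I * θ₁ * m)) *
        Complex.exp (-(2 * π * Complex.I * θ₂ * n)) / Afun W T θ₁ θ₂) :=
    (Measurable.div (by fun_prop) (measurable_Afun W T)).stronglyMeasurable
  have hbound : ∀ θ₁ θ₂ : ℝ, ‖Complex.exp (-(2 * π * Complex.I * θ₁ * m)) *
      Complex.exp (-(2 * π * Complex.I * θ₂ * n)) / Afun W T θ₁ θ₂‖ ≤ (√(W * T))⁻¹ :=
    fun θ₁ θ₂ => by simp [Complex.norm_exp, norm_Afun]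
  calc _ = (√(W * T) : ℂ)⁻¹ * ∫ θ₂ in (0 : ℝ)..1, Complex.exp (-(2 * π * Complex.I * θ₂ * n)) *
        (_root_.sinc (W * T * θ₂ + m) : ℂ) := by
        rw [intervalIntegral_integral_swap_of_norm_le hmeas hbound zero_le_one zero_le_one,
          ← intervalIntegral.integral_const_mul]
        simp_rw [mul_div_right_comm, intervalIntegral.integral_mul_const, integral_exp_div_Afun]
        congr 1; ext; ring
    _ = _ := by
        rw [acoef_eq_integral_unit_interval W hT.ne', ← mul_assoc, ← Complex.ofReal_mul,
          one_div_mul_sqrt_div_mul_eq_inv_sqrt hW.le hT]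
        push_cast
        simp only [sub_neg_eq_add]
end
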